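/- The three Hamiltonians H̃₁ = −(1/q₂)p₁p₂ − (q₁/q₂)p₁p₃ − (q₁/q₂)p₂² − (q₁²/q₂)p₂p₃ + ½(q₃/q₂ − q₁)p₃² − q₁² + q₁q₃/q₂ + q₂, H̃₂ = −(q₁/q₂)p₁p₂ + (1 − q₁²/q₂)p₁p₃ + (½ − q₁²/q₂)p₂² + (q₁ − q₁³/q₂)p₂p₃ + ½(q₁q₃/q₂ + q₂ − q₁²)p₃² + q₁²q₃/q₂ − q₁q₂ + q₃, and H̃₃ = ½p₁² + (q₁ − q₃/q₂)p₁p₂ + (q₂ − q₁q₃/q₂)p₁p₃ + (½q₁² − q₁q₃/q₂)p₂² + (q₁q₂ − q₃ − q₁²q₃/q₂)p₂p₃ + (½q₂² + ½q₃²/q₂ − q₁q₃)p₃² + q₁q₃²/q₂ pairwise Poisson-commute with respect to the canonical Poisson bracket on the region q₂ ≠ 0 of ℝ⁶. -/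

import Mathlib

open scoped BigOperators

/-- The canonical Poisson bracket on `ℝ⁶` with coordinates
`(q₁,q₂,q₃,p₁,p₂,p₃)`: `{F,G} = ∑ i (∂F/∂q_i ∂G/∂p_i − ∂F/∂p_i ∂G/∂q_i)`. -/
noncomputable def poissonBracket3 (F G : (Fin 3 → ℝ) × (Fin 3 → ℝ) → ℝ)
    (ξ : (Fin 3 → ℝ) × (Fin 3 → ℝ)) : ℝ :=
  ∑ i : Fin 3,
    (fderiv ℝ F ξ (Pi.single i 1, 0) * fderiv ℝ G ξ (0, Pi.single i 1)
      - fderiv ℝ F ξ (0, Pi.single i 1) * fderiv ℝ G ξ (Pi.single i 1, 0))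

/-- `H̃₁` of the transformed separation curve `λ⁵+H̃₁λ³+H̃₂λ²+H̃₃ = ½μ²`. -/
noncomputable def tH1 (ξ : (Fin 3 → ℝ) × (Fin 3 → ℝ)) : ℝ :=
  -(1/ξ.1 1) * ξ.2 0 * ξ.2 1 - (ξ.1 0/ξ.1 1) * ξ.2 0 * ξ.2 2
    - (ξ.1 0/ξ.1 1) * (ξ.2 1)^2 - ((ξ.1 0)^2/ξ.1 1) * ξ.2 1 * ξ.2 2
    + (1/2) * (ξ.1 2/ξ.1 1 - ξ.1 0) * (ξ.2 2)^2
    - (ξ.1 0)^2 + ξ.1 0 * ξ.1 2/ξ.1 1 + ξ.1 1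

/-- `H̃₂` of the transformed separation curve. -/
noncomputable def tH2 (ξ : (Fin 3 → ℝ) × (Fin 3 → ℝ)) : ℝ :=
  -(ξ.1 0/ξ.1 1) * ξ.2 0 * ξ.2 1 + (1 - (ξ.1 0)^2/ξ.1 1) * ξ.2 0 * ξ.2 2
    + (1/2 - (ξ.1 0)^2/ξ.1 1) * (ξ.2 1)^2
    + (ξ.1 0 - (ξ.1 0)^3/ξ.1 1) * ξ.2 1 * ξ.2 2
    + (1/2) * (ξ.1 0 * ξ.1 2/ξ.1 1 + ξ.1 1 - (ξ.1 0)^2) * (ξ.2 2)^2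
    + (ξ.1 0)^2 * ξ.1 2/ξ.1 1 - ξ.1 0 * ξ.1 1 + ξ.1 2

/-- `H̃₃` of the transformed separation curve. -/
noncomputable def tH3 (ξ : (Fin 3 → ℝ) × (Fin 3 → ℝ)) : ℝ :=
  (1/2) * (ξ.2 0)^2 + (ξ.1 0 - ξ.1 2/ξ.1 1) * ξ.2 0 * ξ.2 1
    + (ξ.1 1 - ξ.1 0 * ξ.1 2/ξ.1 1) * ξ.2 0 * ξ.2 2
    + ((1/2) * (ξ.1 0)^2 - ξ.1 0 * ξ.1 2/ξ.1 1) * (ξ.2 1)^2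
    + (ξ.1 0 * ξ.1 1 - ξ.1 2 - (ξ.1 0)^2 * ξ.1 2/ξ.1 1) * ξ.2 1 * ξ.2 2
    + ((1/2) * (ξ.1 1)^2 + (1/2) * (ξ.1 2)^2/ξ.1 1 - ξ.1 0 * ξ.1 2) * (ξ.2 2)^2
    + ξ.1 0 * (ξ.1 2)^2/ξ.1 1

/-! Each `H̃ₖ` is a polynomial in `(q, p)` and `1/q₂`, so on `q₂ ≠ 0` its differential is obtained
from the product and quotient rules. Substituting the three gradients into
`∑ (∂_q F ∂_p G − ∂_p F ∂_q G)` gives a rational function in `(q, p)` with denominator a power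
of `q₂`, and its numerator cancels identically. Coordinates are indexed from `0`, so `q₂` is
`ξ.1 1`. -/

theorem HasFDerivAt.div {𝕜 E : Type*} [NontriviallyNormedField 𝕜] [NormedAddCommGroup E]
    [NormedSpace 𝕜 E] {f g : E → 𝕜} {f' g' : E →L[𝕜] 𝕜} {x : E}
    (hf : HasFDerivAt f f' x) (hg : HasFDerivAt g g' x) (hx : g x ≠ 0) :
    HasFDerivAt (fun y => f y / g y) ((g x ^ 2)⁻¹ • (g x • f' - f x • g')) x := by
  have hinv : HasFDerivAt (fun y => (g y)⁻¹) ((-(g x ^ 2)⁻¹) • g') x :=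
    (hasDerivAt_inv hx).comp_hasFDerivAt x hg
  simp only [div_eq_mul_inv]
  refine (hf.mul hinv).congr_fderiv (ContinuousLinearMap.ext fun v => ?_)
  simp only [add_apply, sub_apply, smul_apply, smul_eq_mul]
  field_simp
  ring

section PhaseSpace

variable {ι : Type*} [Fintype ι]

/-- The differential of a function on phase space with position gradient `a` and momentum
gradient `b`. -/
noncomputable def phaseCovector (a b : ι → ℝ) : (ι → ℝ) × (ι → ℝ) →L[ℝ] ℝ :=
  (∑ i, a i • ContinuousLinearMap.proj i).coprod (∑ i, b i • ContinuousLinearMap.proj i)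

@[simp]
theorem phaseCovector_apply (a b : ι → ℝ) (v : (ι → ℝ) × (ι → ℝ)) :
    phaseCovector a b v = ∑ i, a i * v.1 i + ∑ i, b i * v.2 i := by
  simp [phaseCovector]

variable [DecidableEq ι]

theorem phaseCovector_apply_single_fst (a b : ι → ℝ) (i : ι) :
    phaseCovector a b (Pi.single i 1, 0) = a i := by
  simp [Pi.single_apply]

theorem phaseCovector_apply_single_snd (a b : ι → ℝ) (i : ι) :
    phaseCovector a b (0, Pi.single i 1) = b i := by
  simp [Pi.single_apply]

theorem hasFDerivAt_fst_apply (i : ι) (ξ : (ι → ℝ) × (ι → ℝ)) :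
    HasFDerivAt (fun ξ : (ι → ℝ) × (ι → ℝ) => ξ.1 i) (phaseCovector (Pi.single i 1) 0) ξ :=
  (phaseCovector (Pi.single i 1) 0).hasFDerivAt.congr_of_eventuallyEq <|
    .of_forall fun ξ => by simp [Pi.single_apply]

theorem hasFDerivAt_snd_apply (i : ι) (ξ : (ι → ℝ) × (ι → ℝ)) :
    HasFDerivAt (fun ξ : (ι → ℝ) × (ι → ℝ) => ξ.2 i) (phaseCovector 0 (Pi.single i 1)) ξ :=
  (phaseCovector 0 (Pi.single i 1)).hasFDerivAt.congr_of_eventuallyEq <|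
    .of_forall fun ξ => by simp [Pi.single_apply]

end PhaseSpace

theorem poissonBracket3_eq_of_hasFDerivAt {F G : (Fin 3 → ℝ) × (Fin 3 → ℝ) → ℝ}
    {ξ : (Fin 3 → ℝ) × (Fin 3 → ℝ)} {a b c d : Fin 3 → ℝ}
    (hF : HasFDerivAt F (phaseCovector a b) ξ) (hG : HasFDerivAt G (phaseCovector c d) ξ) :
    poissonBracket3 F G ξ = ∑ i, (a i * d i - b i * c i) := by
  simp only [poissonBracket3, hF.fderiv, hG.fderiv, phaseCovector_apply_single_fst,
    phaseCovector_apply_single_snd]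

section

variable {ξ : (Fin 3 → ℝ) × (Fin 3 → ℝ)}

theorem hasFDerivAt_tH1 (hξ : ξ.1 1 ≠ 0) :
    HasFDerivAt tH1 (phaseCovector
      ![-(ξ.2 0 * ξ.2 2 + ξ.2 1 ^ 2 + 2 * ξ.1 0 * ξ.2 1 * ξ.2 2 - ξ.1 2) / ξ.1 1
          - ξ.2 2 ^ 2 / 2 - 2 * ξ.1 0,
        (ξ.2 0 * ξ.2 1 + ξ.1 0 * ξ.2 0 * ξ.2 2 + ξ.1 0 * ξ.2 1 ^ 2 + ξ.1 0 ^ 2 * ξ.2 1 * ξ.2 2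
          - ξ.1 2 * ξ.2 2 ^ 2 / 2 - ξ.1 0 * ξ.1 2) / ξ.1 1 ^ 2 + 1,
        (ξ.2 2 ^ 2 / 2 + ξ.1 0) / ξ.1 1]
      ![-(ξ.2 1 + ξ.1 0 * ξ.2 2) / ξ.1 1,
        -(ξ.2 0 + 2 * ξ.1 0 * ξ.2 1 + ξ.1 0 ^ 2 * ξ.2 2) / ξ.1 1,
        -(ξ.1 0 * ξ.2 0 + ξ.1 0 ^ 2 * ξ.2 1) / ξ.1 1 + (ξ.1 2 / ξ.1 1 - ξ.1 0) * ξ.2 2]) ξ := by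
  have q i := hasFDerivAt_fst_apply i ξ
  have p i := hasFDerivAt_snd_apply i ξ
  have c (a : ℝ) : HasFDerivAt (fun _ => a) (0 : _ →L[ℝ] ℝ) ξ := hasFDerivAt_const a ξ
  -- one product or quotient rule per summand of `tH1`; the result is matched to `tH1` by unfolding
  have d : HasFDerivAt tH1 _ ξ :=
    ((c 1).div (q 1) hξ).neg.mul (p 0) |>.mul (p 1)
      |>.sub (((q 0).div (q 1) hξ).mul (p 0) |>.mul (p 2))
      |>.sub (((q 0).div (q 1) hξ).mul ((p 1).pow 2))
      |>.sub ((((q 0).pow 2).div (q 1) hξ).mul (p 1) |>.mul (p 2))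
      |>.add (((c (1/2)).mul (((q 2).div (q 1) hξ).sub (q 0))).mul ((p 2).pow 2))
      |>.sub ((q 0).pow 2)
      |>.add (((q 0).mul (q 2)).div (q 1) hξ)
      |>.add (q 1)
  refine d.congr_fderiv (ContinuousLinearMap.ext fun v => ?_)
  simp only [Pi.mul_apply, Pi.sub_apply, Pi.neg_apply, add_apply, sub_apply, neg_apply, smul_apply,
    zero_apply, smul_eq_mul, nsmul_eq_mul, phaseCovector_apply, Pi.single_apply, ite_mul, zero_mul,
    Finset.sum_ite_eq', Finset.mem_univ, ↓reduceIte, Pi.zero_apply, Finset.sum_const_zero,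
    Fin.sum_univ_three, Matrix.cons_val_zero, Matrix.cons_val_one, Matrix.cons_val]
  field_simp
  ring

theorem hasFDerivAt_tH2 (hξ : ξ.1 1 ≠ 0) :
    HasFDerivAt tH2 (phaseCovector
      ![-(ξ.2 0 * ξ.2 1 + 2 * ξ.1 0 * ξ.2 0 * ξ.2 2 + 2 * ξ.1 0 * ξ.2 1 ^ 2
            + 3 * ξ.1 0 ^ 2 * ξ.2 1 * ξ.2 2 - ξ.1 2 * ξ.2 2 ^ 2 / 2 - 2 * ξ.1 0 * ξ.1 2) / ξ.1 1
          + ξ.2 1 * ξ.2 2 - ξ.1 0 * ξ.2 2 ^ 2 - ξ.1 1,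
        (ξ.1 0 * ξ.2 0 * ξ.2 1 + ξ.1 0 ^ 2 * ξ.2 0 * ξ.2 2 + ξ.1 0 ^ 2 * ξ.2 1 ^ 2
            + ξ.1 0 ^ 3 * ξ.2 1 * ξ.2 2 - ξ.1 0 * ξ.1 2 * ξ.2 2 ^ 2 / 2 - ξ.1 0 ^ 2 * ξ.1 2)
            / ξ.1 1 ^ 2
          + ξ.2 2 ^ 2 / 2 - ξ.1 0,
        (ξ.1 0 * ξ.2 2 ^ 2 / 2 + ξ.1 0 ^ 2) / ξ.1 1 + 1]
      ![-(ξ.1 0 * ξ.2 1 + ξ.1 0 ^ 2 * ξ.2 2) / ξ.1 1 + ξ.2 2,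
        -(ξ.1 0 * ξ.2 0 + 2 * ξ.1 0 ^ 2 * ξ.2 1 + ξ.1 0 ^ 3 * ξ.2 2) / ξ.1 1
          + ξ.2 1 + ξ.1 0 * ξ.2 2,
        -(ξ.1 0 ^ 2 * ξ.2 0 + ξ.1 0 ^ 3 * ξ.2 1 - ξ.1 0 * ξ.1 2 * ξ.2 2) / ξ.1 1
          + ξ.2 0 + ξ.1 0 * ξ.2 1 + (ξ.1 1 - ξ.1 0 ^ 2) * ξ.2 2]) ξ := by
  have q i := hasFDerivAt_fst_apply i ξ
  have p i := hasFDerivAt_snd_apply i ξ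
  have c (a : ℝ) : HasFDerivAt (fun _ => a) (0 : _ →L[ℝ] ℝ) ξ := hasFDerivAt_const a ξ
  have d : HasFDerivAt tH2 _ ξ :=
    ((q 0).div (q 1) hξ).neg.mul (p 0) |>.mul (p 1)
      |>.add (((c 1).sub (((q 0).pow 2).div (q 1) hξ)).mul (p 0) |>.mul (p 2))
      |>.add (((c (1/2)).sub (((q 0).pow 2).div (q 1) hξ)).mul ((p 1).pow 2))
      |>.add (((q 0).sub (((q 0).pow 3).div (q 1) hξ)).mul (p 1) |>.mul (p 2))
      |>.add (((c (1/2)).mul ((((q 0).mul (q 2)).div (q 1) hξ).add (q 1) |>.sub ((q 0).pow 2))).mul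
        ((p 2).pow 2))
      |>.add ((((q 0).pow 2).mul (q 2)).div (q 1) hξ)
      |>.sub ((q 0).mul (q 1))
      |>.add (q 2)
  refine d.congr_fderiv (ContinuousLinearMap.ext fun v => ?_)
  simp only [Pi.mul_apply, Pi.add_apply, Pi.sub_apply, Pi.neg_apply, add_apply, sub_apply,
    neg_apply, smul_apply, zero_apply, smul_eq_mul, nsmul_eq_mul, phaseCovector_apply,
    Pi.single_apply, ite_mul, zero_mul, Finset.sum_ite_eq', Finset.mem_univ, ↓reduceIte,
    Pi.zero_apply, Finset.sum_const_zero, Fin.sum_univ_three, Matrix.cons_val_zero,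
    Matrix.cons_val_one, Matrix.cons_val]
  field_simp
  ring

theorem hasFDerivAt_tH3 (hξ : ξ.1 1 ≠ 0) :
    HasFDerivAt tH3 (phaseCovector
      ![ξ.2 0 * ξ.2 1 + ξ.1 0 * ξ.2 1 ^ 2 + ξ.1 1 * ξ.2 1 * ξ.2 2 - ξ.1 2 * ξ.2 2 ^ 2
          - (ξ.1 2 * ξ.2 0 * ξ.2 2 + ξ.1 2 * ξ.2 1 ^ 2 + 2 * ξ.1 0 * ξ.1 2 * ξ.2 1 * ξ.2 2
            - ξ.1 2 ^ 2) / ξ.1 1,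
        (ξ.1 2 * ξ.2 0 * ξ.2 1 + ξ.1 0 * ξ.1 2 * ξ.2 0 * ξ.2 2 + ξ.1 0 * ξ.1 2 * ξ.2 1 ^ 2
            + ξ.1 0 ^ 2 * ξ.1 2 * ξ.2 1 * ξ.2 2 - ξ.1 2 ^ 2 * ξ.2 2 ^ 2 / 2 - ξ.1 0 * ξ.1 2 ^ 2)
            / ξ.1 1 ^ 2
          + ξ.2 0 * ξ.2 2 + ξ.1 0 * ξ.2 1 * ξ.2 2 + ξ.1 1 * ξ.2 2 ^ 2,
        -(ξ.2 0 * ξ.2 1 + ξ.1 0 * ξ.2 0 * ξ.2 2 + ξ.1 0 * ξ.2 1 ^ 2 + ξ.1 0 ^ 2 * ξ.2 1 * ξ.2 2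
            - ξ.1 2 * ξ.2 2 ^ 2 - 2 * ξ.1 0 * ξ.1 2) / ξ.1 1
          - ξ.2 1 * ξ.2 2 - ξ.1 0 * ξ.2 2 ^ 2]
      ![ξ.2 0 + ξ.1 0 * ξ.2 1 + ξ.1 1 * ξ.2 2 - (ξ.1 2 * ξ.2 1 + ξ.1 0 * ξ.1 2 * ξ.2 2) / ξ.1 1,
        ξ.1 0 * ξ.2 0 + ξ.1 0 ^ 2 * ξ.2 1 + (ξ.1 0 * ξ.1 1 - ξ.1 2) * ξ.2 2
          - (ξ.1 2 * ξ.2 0 + 2 * ξ.1 0 * ξ.1 2 * ξ.2 1 + ξ.1 0 ^ 2 * ξ.1 2 * ξ.2 2) / ξ.1 1,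
        ξ.1 1 * ξ.2 0 + (ξ.1 0 * ξ.1 1 - ξ.1 2) * ξ.2 1 + (ξ.1 1 ^ 2 - 2 * ξ.1 0 * ξ.1 2) * ξ.2 2
          - (ξ.1 0 * ξ.1 2 * ξ.2 0 + ξ.1 0 ^ 2 * ξ.1 2 * ξ.2 1 - ξ.1 2 ^ 2 * ξ.2 2) / ξ.1 1])
      ξ := by
  have q i := hasFDerivAt_fst_apply i ξ
  have p i := hasFDerivAt_snd_apply i ξ
  have c (a : ℝ) : HasFDerivAt (fun _ => a) (0 : _ →L[ℝ] ℝ) ξ := hasFDerivAt_const a ξ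
  have d : HasFDerivAt tH3 _ ξ :=
    (c (1/2)).mul ((p 0).pow 2)
      |>.add (((q 0).sub ((q 2).div (q 1) hξ)).mul (p 0) |>.mul (p 1))
      |>.add (((q 1).sub (((q 0).mul (q 2)).div (q 1) hξ)).mul (p 0) |>.mul (p 2))
      |>.add ((((c (1/2)).mul ((q 0).pow 2)).sub (((q 0).mul (q 2)).div (q 1) hξ)).mul
        ((p 1).pow 2))
      |>.add (((q 0).mul (q 1) |>.sub (q 2) |>.sub ((((q 0).pow 2).mul (q 2)).div (q 1) hξ)).mul
        (p 1) |>.mul (p 2))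
      |>.add (((c (1/2)).mul ((q 1).pow 2) |>.add (((c (1/2)).mul ((q 2).pow 2)).div (q 1) hξ)
        |>.sub ((q 0).mul (q 2))).mul ((p 2).pow 2))
      |>.add (((q 0).mul ((q 2).pow 2)).div (q 1) hξ)
  refine d.congr_fderiv (ContinuousLinearMap.ext fun v => ?_)
  simp only [Pi.mul_apply, Pi.add_apply, Pi.sub_apply, add_apply, sub_apply, smul_apply, zero_apply,
    smul_eq_mul, nsmul_eq_mul, phaseCovector_apply, Pi.single_apply, ite_mul, zero_mul,
    Finset.sum_ite_eq', Finset.mem_univ, ↓reduceIte, Pi.zero_apply, Finset.sum_const_zero,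
    Fin.sum_univ_three, Matrix.cons_val_zero, Matrix.cons_val_one, Matrix.cons_val]
  field_simp
  ring

end

/-- the Stäckel-transformed Hamiltonians of the separation curve
`λ⁵ + H̃₁λ³ + H̃₂λ² + H̃₃ = ½μ²` in Viète coordinates pairwise Poisson-commute
on the region `q₂ ≠ 0` of ℝ⁶. -/
theorem transformed_hamiltonians_commute :
    ∀ ξ : (Fin 3 → ℝ) × (Fin 3 → ℝ), ξ.1 1 ≠ 0 →
      poissonBracket3 tH1 tH2 ξ = 0 ∧
      poissonBracket3 tH1 tH3 ξ = 0 ∧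
      poissonBracket3 tH2 tH3 ξ = 0 := by
  intro ξ hξ
  have h₁ := hasFDerivAt_tH1 hξ
  have h₂ := hasFDerivAt_tH2 hξ
  have h₃ := hasFDerivAt_tH3 hξ
  refine ⟨(poissonBracket3_eq_of_hasFDerivAt h₁ h₂).trans ?_,
    (poissonBracket3_eq_of_hasFDerivAt h₁ h₃).trans ?_,
    (poissonBracket3_eq_of_hasFDerivAt h₂ h₃).trans ?_⟩ <;>
  · simp only [Fin.sum_univ_three, Matrix.cons_val_zero, Matrix.cons_val_one, Matrix.cons_val]
    field_simp
    ring
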